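/- Let H be a graph with a root o and fix an integer r ≥ 1. Set R := 3r+1. For any two non-empty finite subsets A, B ⊆ V(H) such that B is r-nice and d(A,B) > 3r, there is some L_0 = L_0(A,B) such that for all L ≥ L_0 the following holds: if an edge e is p-pivotal for the event E_L^{A,B} in a configuration (ω,α), then there exist a configuration (ω',α') differing from (ω,α) only inside B_R(e) and a vertex z ∈ B_R(e) such that z is s-pivotal for E_L^{A,B} in (ω',α'). Here E_L^{A,B} := {(ω,α) : C_A(ω_L, α_L) ∩ B ≠ ∅}, where ω_L (resp. α_L) equals ω (resp. α) on edges (resp. vertices) inside B_L(o) and equals 0 elsewhere. -/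

import Mathlib

open MeasureTheory

namespace Percolation

variable {V : Type*} {W : Type*}

/-- The ball of radius `k` around `x` for the graph distance. -/
def ball (G : SimpleGraph V) (x : V) (k : ℕ) : Set V := {y | G.dist x y ≤ k}

/-- The sphere of radius `k` around `x` for the graph distance. -/
def sphere (G : SimpleGraph V) (x : V) (k : ℕ) : Set V := {y | G.dist x y = k}

/-- A graph is locally finite if every vertex has finitely many neighbours. -/
def LocallyFinite' (G : SimpleGraph V) : Prop := ∀ v : V, (G.neighborSet v).Finite

/-- A graph has bounded degree if there is a uniform finite bound on the number of
neighbours of any vertex. -/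
def BoundedDegree (G : SimpleGraph V) : Prop :=
  ∃ D : ℕ, ∀ v : V, (G.neighborSet v).Finite ∧ (G.neighborSet v).ncard ≤ D

/-- A graph is quasi-transitive if the action of its automorphism group on its vertices
has finitely many orbits. -/
def QuasiTransitive (G : SimpleGraph V) : Prop :=
  ∃ S : Set V, S.Finite ∧ ∀ v : V, ∃ s ∈ S, ∃ φ : G ≃g G, φ s = v

/-- The graph of `ω`-open edges of a percolation configuration `ω` on `G`. -/
def openGraph (G : SimpleGraph V) (ω : G.edgeSet → Bool) : SimpleGraph V where
  Adj x y := ∃ h : G.Adj x y, ω ⟨s(x, y), (SimpleGraph.mem_edgeSet G).mpr h⟩ = true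
  symm := by
    constructor
    rintro x y ⟨h, hw⟩
    refine ⟨h.symm, ?_⟩
    have heq : (⟨s(y, x), (SimpleGraph.mem_edgeSet G).mpr h.symm⟩ : G.edgeSet)
        = ⟨s(x, y), (SimpleGraph.mem_edgeSet G).mpr h⟩ := Subtype.ext (Sym2.eq_swap)
    rw [heq]; exact hw
  loopless := by constructor; rintro x ⟨h, -⟩; exact G.ne_of_adj h rfl

/-- The open cluster of the vertex `x` in the configuration `ω`. -/
def cluster (G : SimpleGraph V) (ω : G.edgeSet → Bool) (x : V) : Set V :=
  {y | (openGraph G ω).Reachable x y}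

/-- The open cluster of a set `A` of vertices in the configuration `ω`. -/
def clusterOf (G : SimpleGraph V) (ω : G.edgeSet → Bool) (A : Set V) : Set V :=
  {y | ∃ x ∈ A, (openGraph G ω).Reachable x y}

/-- The event that some open path intersects both `A` and `B`. -/
def connectedEvent (G : SimpleGraph V) (A B : Set V) : Set (G.edgeSet → Bool) :=
  {ω | ∃ a ∈ A, ∃ b ∈ B, (openGraph G ω).Reachable a b}

/-- `μ` is the Bernoulli product measure `⊗_{i ∈ ι} Ber(p)` on `ι → Bool`:
a probability measure giving every finite cylinder event its product probability. -/
def IsBernoulliProduct {ι : Type*} (p : ℝ) (μ : Measure (ι → Bool)) : Prop :=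
  IsProbabilityMeasure μ ∧
    ∀ (t : Finset ι) (f : ι → Bool),
      μ {ω | ∀ i ∈ t, ω i = f i} =
        ∏ i ∈ t, ENNReal.ofReal (if f i then p else 1 - p)

/-- `μ` is the product measure `Ber(p)^{⊗ι} ⊗ Ber(s)^{⊗κ}` on `(ι → Bool) × (κ → Bool)`. -/
def IsBernoulliPair {ι κ : Type*} (p s : ℝ)
    (μ : Measure ((ι → Bool) × (κ → Bool))) : Prop :=
  IsProbabilityMeasure μ ∧
    ∀ (t : Finset ι) (u : Finset κ) (f : ι → Bool) (g : κ → Bool),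
      μ {c | (∀ i ∈ t, c.1 i = f i) ∧ (∀ j ∈ u, c.2 j = g j)} =
        (∏ i ∈ t, ENNReal.ofReal (if f i then p else 1 - p)) *
          ∏ j ∈ u, ENNReal.ofReal (if g j then s else 1 - s)

/-- The critical parameter `p_c` of a graph: the infimum of those `p ∈ [0,1]` for which
Bernoulli(p) bond percolation produces an infinite cluster with positive probability
(with the convention that it equals `1` when no such `p` exists). -/
noncomputable def pc (G : SimpleGraph V) : ℝ :=
  sInf ({p : ℝ | p ∈ Set.Icc (0 : ℝ) 1 ∧
    ∀ μ : Measure (G.edgeSet → Bool), IsBernoulliProduct p μ →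
      0 < μ {ω | ∃ x : V, (cluster G ω x).Infinite}} ∪ {1})

/-- The uniqueness parameter `p_u` of a graph: the infimum of those `p ∈ [0,1]` for which
Bernoulli(p) bond percolation produces exactly one infinite cluster almost surely
(with the convention that it equals `1` when no such `p` exists). -/
noncomputable def pu (G : SimpleGraph V) : ℝ :=
  sInf ({p : ℝ | p ∈ Set.Icc (0 : ℝ) 1 ∧
    ∀ μ : Measure (G.edgeSet → Bool), IsBernoulliProduct p μ →
      μ {ω | ∃! C : (openGraph G ω).ConnectedComponent, C.supp.Infinite} = 1} ∪ {1})

/-- A weak covering map: 1-Lipschitz for the graph distances, and every edge at `π x`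
lifts to an edge at `x`. -/
structure IsWeakCover (G : SimpleGraph V) (H : SimpleGraph W) (π : V → W) : Prop where
  lipschitz : ∀ x y : V, H.dist (π x) (π y) ≤ G.dist x y
  lift : ∀ x : V, ∀ u : W, H.Adj (π x) u → ∃ y : V, G.Adj x y ∧ π y = u

/-- A strong covering map: 1-Lipschitz for the graph distances, and every edge at `π x`
lifts to a *unique* edge at `x`. -/
structure IsStrongCover (G : SimpleGraph V) (H : SimpleGraph W) (π : V → W) : Prop where
  lipschitz : ∀ x y : V, H.dist (π x) (π y) ≤ G.dist x y
  lift : ∀ x : V, ∀ u : W, H.Adj (π x) u → ∃! y : V, G.Adj x y ∧ π y = u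

/-- `π` has tame fibres: for some `R`, every vertex has another vertex of its fibre
within distance `R`. -/
def TameFibres (G : SimpleGraph V) (π : V → W) : Prop :=
  ∃ R : ℕ, ∀ x : V, ∃ y : V, π x = π y ∧ 0 < G.dist x y ∧ G.dist x y ≤ R

/-- `π` has bounded fibres: fibres have uniformly bounded diameter. -/
def BoundedFibres (G : SimpleGraph V) (π : V → W) : Prop :=
  ∃ K : ℕ, ∀ x y : V, π x = π y → G.dist x y ≤ K

/-- `T'` is a lift of the subtree `T` through `π`: a subtree of `G` such that `π` induces
a graph isomorphism from `T'` onto `T`. -/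
def IsLift (G : SimpleGraph V) (H : SimpleGraph W) (π : V → W)
    (T : H.Subgraph) (T' : G.Subgraph) : Prop :=
  T'.coe.IsTree ∧ Set.BijOn π T'.verts T.verts ∧
    ∀ x y : V, x ∈ T'.verts → y ∈ T'.verts → (T'.Adj x y ↔ T.Adj (π x) (π y))

/-- The disjoint tree-lifting property of `π`. -/
def HasDisjointTreeLifting (G : SimpleGraph V) (H : SimpleGraph W) (π : V → W) : Prop :=
  ∀ T : H.Subgraph, T.coe.IsTree →
    ∀ x y : V, x ≠ y → π x = π y → π x ∈ T.verts →
      ∃ Tx Ty : G.Subgraph, IsLift G H π T Tx ∧ IsLift G H π T Ty ∧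
        x ∈ Tx.verts ∧ y ∈ Ty.verts ∧ Disjoint Tx.verts Ty.verts

/-- All edges with both endpoints in the ball `B_r(u)` are `ω`-open. -/
def fullyOpen (H : SimpleGraph V) (r : ℕ) (ω : H.edgeSet → Bool) (u : V) : Prop :=
  ∀ e : H.edgeSet, (∀ z ∈ (e : Sym2 V), H.dist u z ≤ r) → ω e = true

/-- The enhancement step: add all vertices `v` at distance exactly `r+1` from a vertex
`u` of `S` whose `r`-ball is fully open and with `α u = 1`. -/
def enhance (H : SimpleGraph V) (r : ℕ) (ω : H.edgeSet → Bool) (α : V → Bool)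
    (S : Set V) : Set V :=
  S ∪ {v | ∃ u ∈ S, H.dist u v = r + 1 ∧ fullyOpen H r ω u ∧ α u = true}

/-- The sequence `C_n` of the enhanced exploration started from `A`: odd steps spread
along open clusters, even steps perform the enhancement. -/
def enhSeq (H : SimpleGraph V) (r : ℕ) (ω : H.edgeSet → Bool) (α : V → Bool)
    (A : Set V) : ℕ → Set V
  | 0 => A
  | n + 1 =>
      if n % 2 = 0 then clusterOf H ω (enhSeq H r ω α A n)
      else enhance H r ω α (enhSeq H r ω α A n)

/-- The enhanced cluster `C_A(ω, α)`. -/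
def enhCluster (H : SimpleGraph V) (r : ℕ) (ω : H.edgeSet → Bool) (α : V → Bool)
    (A : Set V) : Set V := ⋃ n, enhSeq H r ω α A n

open scoped Classical in
/-- Set the state of the edge `e` to `b`. -/
noncomputable def flipE (H : SimpleGraph V) (ω : H.edgeSet → Bool) (e : H.edgeSet)
    (b : Bool) : H.edgeSet → Bool := Function.update ω e b

open scoped Classical in
/-- Set the state of the vertex `v` to `b`. -/
noncomputable def flipV (α : V → Bool) (v : V) (b : Bool) : V → Bool :=
  Function.update α v b

/-- The edge `e` is p-pivotal for the event `E` in the configuration `c`. -/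
def PPivotal (H : SimpleGraph V) (E : Set ((H.edgeSet → Bool) × (V → Bool)))
    (e : H.edgeSet) (c : (H.edgeSet → Bool) × (V → Bool)) : Prop :=
  (flipE H c.1 e true, c.2) ∈ E ∧ (flipE H c.1 e false, c.2) ∉ E

/-- The vertex `z` is s-pivotal for the event `E` in the configuration `c`. -/
def SPivotal (H : SimpleGraph V) (E : Set ((H.edgeSet → Bool) × (V → Bool)))
    (z : V) (c : (H.edgeSet → Bool) × (V → Bool)) : Prop :=
  (c.1, flipV c.2 z true) ∈ E ∧ (c.1, flipV c.2 z false) ∉ E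

/-- For an edge `e = {x,y}`, the set `B_R(e) = B_R(x) ∪ B_R(y)`. -/
def edgeBall (H : SimpleGraph V) (e : H.edgeSet) (R : ℕ) : Set V :=
  {z | ∃ w ∈ (e : Sym2 V), H.dist w z ≤ R}

/-- The connected component of `x` inside the subgraph of `G` induced by `S`
(as a subset of the vertices of `G`). -/
def compIn (G : SimpleGraph V) (S : Set V) (x : V) : Set V :=
  {y | ∃ w : G.Walk x y, ∀ z ∈ w.support, z ∈ S}

/-- The quotient graph `G/Γ`: vertices are the orbits, two distinct orbits being adjacent
iff some edge of `G` intersects both. -/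
def quotientGraph (G : SimpleGraph V) (Γ : Type*) [Group Γ] [MulAction Γ V] :
    SimpleGraph (Quotient (MulAction.orbitRel Γ V)) where
  Adj a b := a ≠ b ∧ ∃ x y : V, G.Adj x y ∧
      Quotient.mk (MulAction.orbitRel Γ V) x = a ∧ Quotient.mk (MulAction.orbitRel Γ V) y = b
  symm := by constructor; rintro a b ⟨hne, x, y, hxy, hx, hy⟩; exact ⟨hne.symm, y, x, hxy.symm, hy, hx⟩
  loopless := by constructor; rintro a ⟨hne, -⟩; exact hne rfl

open scoped Classical in
/-- The configuration `ω_L`: agrees with `ω` on edges inside `B_L(o)`, closed elsewhere. -/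
noncomputable def truncE (H : SimpleGraph V) (o : V) (L : ℕ) (ω : H.edgeSet → Bool) :
    H.edgeSet → Bool :=
  fun e => if ∀ z ∈ (e : Sym2 V), H.dist o z ≤ L then ω e else false

/-- The configuration `α_L`: agrees with `α` on vertices of `B_L(o)`, `0` elsewhere. -/
noncomputable def truncV (H : SimpleGraph V) (o : V) (L : ℕ) (α : V → Bool) : V → Bool :=
  fun v => if H.dist o v ≤ L then α v else false

/-- `B` is `r`-nice: finite, non-empty, and every vertex outside of `B` belongs to some
`r`-ball avoiding `B`. -/
def RNice (H : SimpleGraph V) (r : ℕ) (B : Set V) : Prop :=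
  B.Finite ∧ B.Nonempty ∧ ∀ u ∉ B, ∃ v : V, u ∈ ball H v r ∧ ∀ w ∈ ball H v r, w ∉ B

/-!
Switch the vertex states off on `B_R(e)` one vertex at a time. If the event is lost at some
step, the vertex switched off there is s-pivotal. Otherwise `e` is still p-pivotal, now with no
enhancement near `e`. Then the cluster `K` of `A` with `e` closed misses `B`, and opening `e`
joins an endpoint `x ∈ K` to the other endpoint `y`, whose cluster meets `B`. Pick `z` with
`d(z, x) ≤ r` such that `B_r(z)` lies in `B_L(o)` and avoids `B`; open every edge inside
`B_r(z)` and close every edge from `B_r(z)` to a vertex outside `B_r(z) ∪ K`. With `z` switched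
off, the cluster of `A` stays inside `K ∪ B_r(z)`. With `z` switched on, it reaches `z` through
`x` and the fully open ball, and the enhancement at `z` adds the sphere of radius `r + 1`; this
recovers the whole cluster of `y`, since `d(z, y) ≤ r + 1`.
-/

variable {H : SimpleGraph V}

section Distance

@[simp]
lemma mem_ball {x y : V} {k : ℕ} : y ∈ ball H x k ↔ H.dist x y ≤ k := Iff.rfl

lemma dist_le_dist_add_one_of_adj (hconn : H.Connected) {a b : V} (h : H.Adj a b) (x : V) :
    H.dist x a ≤ H.dist x b + 1 := by
  have htri : H.dist x a ≤ H.dist x b + H.dist b a := hconn.dist_triangle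
  rwa [SimpleGraph.dist_eq_one_iff_adj.mpr h.symm] at htri

lemma exists_adj_dist_le_of_dist_le_succ (hconn : H.Connected) {x y : V} {k : ℕ}
    (h : H.dist x y ≤ k + 1) : y = x ∨ ∃ w, H.Adj w y ∧ H.dist x w ≤ k := by
  obtain ⟨p, hp⟩ := hconn.exists_walk_length_eq_dist y x
  cases p with
  | nil => exact Or.inl rfl
  | cons hadj q =>
    refine Or.inr ⟨_, hadj.symm, ?_⟩
    have hq := SimpleGraph.dist_le q
    rw [SimpleGraph.Walk.length_cons] at hp
    rw [SimpleGraph.dist_comm] at h ⊢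
    omega

lemma exists_dist_le_dist_le (hconn : H.Connected) (x y : V) (k : ℕ) :
    ∃ z, H.dist x z ≤ k ∧ H.dist z y ≤ H.dist x y - k := by
  obtain ⟨p, hp⟩ := hconn.exists_walk_length_eq_dist x y
  refine ⟨p.getVert k, ?_, ?_⟩
  · have h := SimpleGraph.dist_le (p.take k)
    rw [SimpleGraph.Walk.take_length] at h
    omega
  · have h := SimpleGraph.dist_le (p.drop k)
    rwa [SimpleGraph.Walk.drop_length, hp] at h

lemma finite_ball (hconn : H.Connected) (hlf : LocallyFinite' H) (x : V) :
    ∀ k, (ball H x k).Finite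
  | 0 => (Set.finite_singleton x).subset fun y hy =>
      ((hconn.dist_eq_zero_iff).mp (Nat.le_zero.mp hy)).symm
  | k + 1 => by
    have ih := finite_ball hconn hlf x k
    refine (ih.union (ih.biUnion fun w _ => hlf w)).subset fun y hy => ?_
    rcases exists_adj_dist_le_of_dist_le_succ hconn hy with rfl | ⟨w, hwy, hw⟩
    · exact Or.inl (by simp)
    · exact Or.inr (Set.mem_biUnion hw hwy)

lemma exists_eq_mk (s : Sym2 V) : ∃ x y, s = s(x, y) :=
  Sym2.inductionOn s fun x y => ⟨x, y, rfl⟩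

lemma finite_edgeBall (hconn : H.Connected) (hlf : LocallyFinite' H) (e : H.edgeSet)
    (R : ℕ) : (edgeBall H e R).Finite := by
  obtain ⟨x, y, hxy⟩ := exists_eq_mk (e : Sym2 V)
  refine ((finite_ball hconn hlf x R).union (finite_ball hconn hlf y R)).subset ?_
  rintro v ⟨w, hw, hwv⟩
  rw [hxy, Sym2.mem_iff] at hw
  rcases hw with rfl | rfl
  exacts [Or.inl hwv, Or.inr hwv]

/-- If `x` is deep inside `B_L(o)`, `r`-niceness supplies `z`; otherwise `z` is taken on a
geodesic from `o` to `x`, so that `B_r(z)` stays in `B_L(o)` and is too far from `o` to meet `B`. -/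
lemma exists_ball_subset_ball_disjoint (hconn : H.Connected) {r D L : ℕ} {o x : V}
    {B : Set V} (hB : ∀ u ∉ B, ∃ v, u ∈ ball H v r ∧ ∀ w ∈ ball H v r, w ∉ B)
    (hD : B ⊆ ball H o D) (hL : D + 4 * r ≤ L) (hxB : x ∉ B) (hxL : H.dist o x ≤ L) :
    ∃ z, H.dist z x ≤ r ∧ ball H z r ⊆ ball H o L ∧ ∀ w ∈ ball H z r, w ∉ B := by
  by_cases hdeep : H.dist o x + 2 * r ≤ L
  · obtain ⟨z, hxz, hzB⟩ := hB x hxB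
    refine ⟨z, hxz, fun w hw => ?_, hzB⟩
    have h₁ : H.dist o w ≤ H.dist o x + H.dist x w := hconn.dist_triangle
    have h₂ : H.dist x w ≤ H.dist x z + H.dist z w := hconn.dist_triangle
    have h₃ : H.dist x z = H.dist z x := SimpleGraph.dist_comm
    simp only [mem_ball] at hxz hw ⊢
    omega
  · obtain ⟨z, hoz, hzx⟩ := exists_dist_le_dist_le hconn o x (H.dist o x - r)
    refine ⟨z, by omega, fun w hw => ?_, fun w hw hwB => ?_⟩
    · have h : H.dist o w ≤ H.dist o z + H.dist z w := hconn.dist_triangle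
      simp only [mem_ball] at hw ⊢
      omega
    · have h₁ : H.dist o x ≤ H.dist o w + H.dist w x := hconn.dist_triangle
      have h₂ : H.dist w x ≤ H.dist w z + H.dist z x := hconn.dist_triangle
      have h₃ := hD hwB
      have h₄ : H.dist w z = H.dist z w := SimpleGraph.dist_comm
      simp only [mem_ball] at hw h₃
      omega

end Distance

section Closure

variable {r : ℕ} {ω ω' : H.edgeSet → Bool} {β β' : V → Bool} {A A' X Y : Set V}

structure EnhClosed (H : SimpleGraph V) (r : ℕ) (ω : H.edgeSet → Bool) (β : V → Bool)
    (X : Set V) : Prop where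
  adj_mem : ∀ a ∈ X, ∀ b, (openGraph H ω).Adj a b → b ∈ X
  sphere_mem : ∀ u ∈ X, β u = true → fullyOpen H r ω u →
    ∀ v, H.dist u v = r + 1 → v ∈ X

namespace EnhClosed

lemma reachable_mem (hX : EnhClosed H r ω β X) {a b : V} (ha : a ∈ X)
    (h : (openGraph H ω).Reachable a b) : b ∈ X := by
  obtain ⟨p⟩ := h
  induction p with
  | nil => exact ha
  | cons hadj _ ih => exact ih (hX.adj_mem _ ha _ hadj)

lemma union (hX : EnhClosed H r ω β X) (hY : EnhClosed H r ω β Y) :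
    EnhClosed H r ω β (X ∪ Y) where
  adj_mem := by
    rintro a (ha | ha) b hab
    exacts [Or.inl (hX.adj_mem a ha b hab), Or.inr (hY.adj_mem a ha b hab)]
  sphere_mem := by
    rintro u (hu | hu) hβ hfo v hv
    exacts [Or.inl (hX.sphere_mem u hu hβ hfo v hv), Or.inr (hY.sphere_mem u hu hβ hfo v hv)]

lemma enhSeq_subset (hX : EnhClosed H r ω β X) (hA : A ⊆ X) :
    ∀ n, enhSeq H r ω β A n ⊆ X
  | 0 => hA
  | n + 1 => by
    have ih := hX.enhSeq_subset hA n
    rw [enhSeq]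
    split
    · rintro y ⟨x, hx, hxy⟩
      exact hX.reachable_mem (ih hx) hxy
    · rintro y (hy | ⟨u, hu, hd, hfo, hβ⟩)
      exacts [ih hy, hX.sphere_mem u (ih hu) hβ hfo y hd]

lemma enhCluster_subset (hX : EnhClosed H r ω β X) (hA : A ⊆ X) :
    enhCluster H r ω β A ⊆ X :=
  Set.iUnion_subset (hX.enhSeq_subset hA)

end EnhClosed

lemma subset_enhCluster : A ⊆ enhCluster H r ω β A :=
  fun _ hx => Set.mem_iUnion.mpr ⟨0, hx⟩

lemma enhSeq_mono {n m : ℕ} (h : n ≤ m) : enhSeq H r ω β A n ⊆ enhSeq H r ω β A m := by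
  induction h with
  | refl => exact subset_rfl
  | step _ ih =>
    refine ih.trans ?_
    rw [enhSeq]
    split
    · exact fun x hx => ⟨x, hx, .refl x⟩
    · exact Set.subset_union_left

lemma enhClosed_enhCluster : EnhClosed H r ω β (enhCluster H r ω β A) where
  adj_mem a ha b hab := by
    obtain ⟨n, hn⟩ := Set.mem_iUnion.mp ha
    refine Set.mem_iUnion.mpr ⟨2 * n + 1, ?_⟩
    rw [enhSeq, if_pos (Nat.mul_mod_right 2 n)]
    exact ⟨a, enhSeq_mono (by omega) hn, hab.reachable⟩
  sphere_mem u hu hβ hfo v hv := by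
    obtain ⟨n, hn⟩ := Set.mem_iUnion.mp hu
    refine Set.mem_iUnion.mpr ⟨2 * n + 2, ?_⟩
    rw [enhSeq, if_neg (by omega)]
    exact Or.inr ⟨u, enhSeq_mono (by omega) hn, hv, hfo, hβ⟩

lemma enhCluster_subset_enhCluster (hA : A ⊆ A')
    (hadj : ∀ a ∈ enhCluster H r ω β A, ∀ b,
      (openGraph H ω).Adj a b → (openGraph H ω').Adj a b)
    (hsphere : ∀ u ∈ enhCluster H r ω β A, β u = true → fullyOpen H r ω u →
      β' u = true ∧ fullyOpen H r ω' u) :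
    enhCluster H r ω β A ⊆ enhCluster H r ω' β' A' := by
  suffices h : enhCluster H r ω β A ⊆ enhCluster H r ω β A ∩ enhCluster H r ω' β' A' from
    fun v hv => (h hv).2
  refine EnhClosed.enhCluster_subset ⟨?_, ?_⟩
    fun a ha => ⟨subset_enhCluster ha, subset_enhCluster (hA ha)⟩
  · rintro a ⟨ha, ha'⟩ b hab
    exact ⟨enhClosed_enhCluster.adj_mem a ha b hab,
      enhClosed_enhCluster.adj_mem a ha' b (hadj a ha b hab)⟩
  · rintro u ⟨hu, hu'⟩ hβ hfo v hv
    obtain ⟨hβ', hfo'⟩ := hsphere u hu hβ hfo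
    exact ⟨enhClosed_enhCluster.sphere_mem u hu hβ hfo v hv,
      enhClosed_enhCluster.sphere_mem u hu' hβ' hfo' v hv⟩

end Closure

section Configurations

variable {o : V} {L : ℕ} {ω : H.edgeSet → Bool} {α : V → Bool} {e f : H.edgeSet} {b : Bool}

lemma flipE_apply_of_ne (h : f ≠ e) : flipE H ω e b f = ω f := by
  simp [flipE, h]

lemma flipV_apply_self (z : V) : flipV α z b z = b := by
  simp [flipV]

lemma flipV_apply_of_ne {z v : V} (h : v ≠ z) : flipV α z b v = α v := by
  simp [flipV, h]

lemma flipV_eq_self {z : V} (h : α z = b) : flipV α z b = α := by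
  simp [flipV, h]

lemma flipV_true_of_eq_true {z v : V} (h : α v = true) : flipV α z true v = true := by
  by_cases hv : v = z
  · rw [hv, flipV_apply_self]
  · rwa [flipV_apply_of_ne hv]

lemma truncV_eq_true_iff {v : V} :
    truncV H o L α v = true ↔ H.dist o v ≤ L ∧ α v = true := by
  unfold truncV
  split_ifs with h <;> simp [h]

lemma truncV_flipV {z : V} (hz : H.dist o z ≤ L) :
    truncV H o L (flipV α z b) = flipV (truncV H o L α) z b := by
  funext v
  by_cases hv : v = z
  · subst hv
    simp [truncV, flipV_apply_self, hz]
  · simp [truncV, flipV_apply_of_ne hv]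

lemma truncE_flipE_apply_of_ne (h : f ≠ e) :
    truncE H o L (flipE H ω e b) f = truncE H o L ω f := by
  simp only [truncE, flipE_apply_of_ne h]

lemma truncE_flipE_of_not_forall (he : ¬ ∀ w ∈ (e : Sym2 V), H.dist o w ≤ L) :
    truncE H o L (flipE H ω e b) = truncE H o L ω := by
  funext f
  by_cases hf : f = e
  · subst hf
    simp [truncE, he]
  · exact truncE_flipE_apply_of_ne hf

end Configurations

/-- Lowering `α` to `α'` one vertex at a time, the first step that leaves `E` exhibits an
s-pivotal vertex. -/
lemma exists_sPivotal_of_mem_of_not_mem (E : Set ((H.edgeSet → Bool) × (V → Bool)))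
    (ω : H.edgeSet → Bool) {S : Set V} (hS : S.Finite) :
    ∀ {α α' : V → Bool}, (ω, α) ∈ E → (ω, α') ∉ E →
      (∀ v, α' v = true → α v = true) → (∀ v ∉ S, α' v = α v) →
      ∃ z ∈ S, ∃ β : V → Bool, (∀ v ∉ S, β v = α v) ∧ SPivotal H E z (ω, β) := by
  induction S, hS using Set.Finite.induction_on with
  | empty =>
    intro α α' hα hα' _ hagree
    exact absurd ((funext fun v => hagree v (Set.notMem_empty v)) ▸ hα) hα'
  | @insert a S ha _ ih =>
    intro α α' hα hα' hle hagree
    by_cases h₁ : (ω, flipV α a (α' a)) ∈ E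
    · have hle₁ : ∀ v, α' v = true → flipV α a (α' a) v = true := by
        intro v hv
        by_cases hva : v = a
        · rwa [hva, flipV_apply_self, ← hva]
        · rw [flipV_apply_of_ne hva]
          exact hle v hv
      have hagree₁ : ∀ v ∉ S, α' v = flipV α a (α' a) v := by
        intro v hv
        by_cases hva : v = a
        · rw [hva, flipV_apply_self]
        · rw [flipV_apply_of_ne hva]
          exact hagree v fun h => h.elim hva hv
      obtain ⟨z, hz, β, hβ, hpiv⟩ := ih h₁ hα' hle₁ hagree₁
      refine ⟨z, Or.inr hz, β, fun v hv => ?_, hpiv⟩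
      rw [hβ v fun h => hv (Or.inr h), flipV_apply_of_ne fun h => hv (Or.inl h)]
    · have hne : α' a ≠ α a := fun h => h₁ (by rwa [h, flipV_eq_self rfl])
      have hα'a : α' a = false := by
        cases h : α' a
        · rfl
        · exact absurd (h.trans (hle a h).symm) hne
      have hαa : α a = true := by
        cases h : α a
        · exact absurd (hα'a.trans h.symm) hne
        · rfl
      refine ⟨a, Or.inl rfl, α, fun _ _ => rfl, ?_, ?_⟩
      · rwa [flipV_eq_self hαa]
      · rwa [← hα'a]

/-- The event `E_L^{A,B}`. -/
def enhConnEvent (H : SimpleGraph V) (r : ℕ) (o : V) (L : ℕ) (A B : Set V) :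
    Set ((H.edgeSet → Bool) × (V → Bool)) :=
  {c | (enhCluster H r (truncE H o L c.1) (truncV H o L c.2) A ∩ B).Nonempty}

section Event

variable {r L : ℕ} {o : V} {A B : Set V}

lemma mem_enhConnEvent_of_le {ω : H.edgeSet → Bool} {α α' : V → Bool}
    (hα : ∀ v, α v = true → α' v = true) (h : (ω, α) ∈ enhConnEvent H r o L A B) :
    (ω, α') ∈ enhConnEvent H r o L A B := by
  obtain ⟨b, hb, hbB⟩ := h
  refine ⟨b, enhCluster_subset_enhCluster subset_rfl (fun _ _ _ hab => hab) ?_ hb, hbB⟩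
  intro u _ hu hfo
  rw [truncV_eq_true_iff] at hu ⊢
  exact ⟨⟨hu.1, hα u hu.2⟩, hfo⟩

lemma forall_dist_le_of_pPivotal {e : H.edgeSet} {c : (H.edgeSet → Bool) × (V → Bool)}
    (hpiv : PPivotal H (enhConnEvent H r o L A B) e c) :
    ∀ w ∈ (e : Sym2 V), H.dist o w ≤ L := by
  by_contra he
  apply hpiv.2
  have h := hpiv.1
  simp only [enhConnEvent, Set.mem_ofPred_eq, truncE_flipE_of_not_forall he] at h ⊢
  exact h

end Event

section OpenEdge

variable {r : ℕ} {ω ω' : H.edgeSet → Bool} {β : V → Bool} {A X : Set V} {e : H.edgeSet}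

lemma EnhClosed.of_eq_of_ne (hX : EnhClosed H r ω β X) (hω : ∀ f ≠ e, ω' f = ω f)
    (hβ : ∀ u, β u = true → ¬ ∀ w ∈ (e : Sym2 V), H.dist u w ≤ r)
    (he : ∀ a ∈ (e : Sym2 V), a ∈ X → ∀ b ∈ (e : Sym2 V), b ∈ X) :
    EnhClosed H r ω' β X where
  adj_mem := by
    rintro a ha b ⟨hab, hf⟩
    by_cases hfe : (⟨s(a, b), (SimpleGraph.mem_edgeSet H).mpr hab⟩ : H.edgeSet) = e
    · subst hfe
      exact he a (Sym2.mem_mk_left a b) ha b (Sym2.mem_mk_right a b)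
    · exact hX.adj_mem a ha b ⟨hab, hω _ hfe ▸ hf⟩
  sphere_mem u hu hβu hfo :=
    hX.sphere_mem u hu hβu fun f hf => by
      have hfe : f ≠ e := by
        rintro rfl
        exact hβ u hβu hf
      rw [← hω f hfe]
      exact hfo f hf

lemma exists_endpoint_of_mem_enhCluster (hω : ∀ f ≠ e, ω' f = ω f)
    (hβ : ∀ u, β u = true → ¬ ∀ w ∈ (e : Sym2 V), H.dist u w ≤ r) {v : V}
    (hv : v ∈ enhCluster H r ω' β A) (hvK : v ∉ enhCluster H r ω β A) :
    ∃ x y, (e : Sym2 V) = s(x, y) ∧ x ∈ enhCluster H r ω β A ∧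
      v ∈ enhCluster H r ω β {y} := by
  obtain ⟨x, y, he⟩ := exists_eq_mk (e : Sym2 V)
  set K := enhCluster H r ω β A
  have hC : ∀ w ∈ K, enhCluster H r ω β {w} ⊆ K := fun w hw =>
    enhClosed_enhCluster.enhCluster_subset (Set.singleton_subset_iff.mpr hw)
  have hmem : ∀ a ∈ (e : Sym2 V), a = x ∨ a = y := fun a ha => Sym2.mem_iff.mp (he ▸ ha)
  have hxy : x ∈ K ∨ y ∈ K := by
    by_contra! h
    refine hvK ((enhClosed_enhCluster.of_eq_of_ne hω hβ ?_).enhCluster_subset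
      subset_enhCluster hv)
    intro a ha haK
    rcases hmem a ha with rfl | rfl
    exacts [absurd haK h.1, absurd haK h.2]
  have hv' : v ∈ K ∪ (enhCluster H r ω β {x} ∪ enhCluster H r ω β {y}) := by
    have hC : EnhClosed H r ω β (K ∪ (enhCluster H r ω β {x} ∪ enhCluster H r ω β {y})) :=
      enhClosed_enhCluster.union (enhClosed_enhCluster.union enhClosed_enhCluster)
    refine (hC.of_eq_of_ne hω hβ ?_).enhCluster_subset
      (fun a ha => Or.inl (subset_enhCluster ha)) hv
    intro _ _ _ b hb
    rcases hmem b hb with rfl | rfl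
    exacts [Or.inr (Or.inl (subset_enhCluster rfl)), Or.inr (Or.inr (subset_enhCluster rfl))]
  rcases hv' with hvK' | hvx | hvy
  · exact absurd hvK' hvK
  · exact ⟨y, x, he.trans Sym2.eq_swap, hxy.resolve_left fun hx => hvK (hC x hx hvx), hvx⟩
  · exact ⟨x, y, he, hxy.resolve_right fun hy => hvK (hC y hy hvy), hvy⟩

end OpenEdge

open scoped Classical in
noncomputable def gadget (H : SimpleGraph V) (I K : Set V) (ω : H.edgeSet → Bool) :
    H.edgeSet → Bool := fun f =>
  if ∀ w ∈ (f : Sym2 V), w ∈ I then true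
  else if (∃ w ∈ (f : Sym2 V), w ∈ I) ∧ ¬ ∀ w ∈ (f : Sym2 V), w ∈ I ∪ K then false
  else ω f

section Gadget

variable {I K : Set V} {ω : H.edgeSet → Bool} {f : H.edgeSet}

lemma gadget_of_forall_mem (hf : ∀ w ∈ (f : Sym2 V), w ∈ I) : gadget H I K ω f = true := by
  simp only [gadget, if_pos hf]

lemma gadget_of_forall_not_mem (hf : ∀ w ∈ (f : Sym2 V), w ∉ I) :
    gadget H I K ω f = ω f := by
  have h₁ : ¬ ∀ w ∈ (f : Sym2 V), w ∈ I := fun h =>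
    hf _ (Sym2.out_fst_mem _) (h _ (Sym2.out_fst_mem _))
  have h₂ : ¬ ∃ w ∈ (f : Sym2 V), w ∈ I := fun ⟨w, hw, hwI⟩ => hf w hw hwI
  simp only [gadget, if_neg h₁, h₂, false_and, if_false]

lemma gadget_of_forall_mem_union (hf : ∀ w ∈ (f : Sym2 V), w ∈ I ∪ K) (hω : ω f = true) :
    gadget H I K ω f = true := by
  unfold gadget
  split_ifs with h₁ h₂
  exacts [rfl, absurd hf h₂.2, hω]

lemma forall_mem_union_of_gadget (h : gadget H I K ω f = true)
    (hI : ∃ w ∈ (f : Sym2 V), w ∈ I) : ∀ w ∈ (f : Sym2 V), w ∈ I ∪ K := by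
  unfold gadget at h
  split_ifs at h with h₁ h₂
  · exact fun w hw => Or.inl (h₁ w hw)
  · by_contra h₃
    exact h₂ ⟨hI, h₃⟩

lemma truncE_gadget {o : V} {L : ℕ} (hI : I ⊆ ball H o L) :
    truncE H o L (gadget H I K ω) = gadget H I K (truncE H o L ω) := by
  funext f
  by_cases hfI : ∀ w ∈ (f : Sym2 V), w ∈ I
  · have hfL : ∀ w ∈ (f : Sym2 V), H.dist o w ≤ L := fun w hw => hI (hfI w hw)
    simp only [truncE, gadget, if_pos hfI, if_pos hfL]
  · simp only [truncE, gadget, if_neg hfI]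
    split_ifs <;> rfl

variable (hconn : H.Connected) {r : ℕ} {z : V}
include hconn

lemma gadget_ball_of_lt_dist {w : V} (hw : w ∈ (f : Sym2 V)) (hzw : r + 1 < H.dist z w) :
    gadget H (ball H z r) K ω f = ω f := by
  refine gadget_of_forall_not_mem fun v hv hvI => ?_
  obtain ⟨a, b, hab⟩ := exists_eq_mk (f : Sym2 V)
  have hadj : H.Adj a b := by
    rw [← SimpleGraph.mem_edgeSet, ← hab]
    exact f.2
  have h₁ := dist_le_dist_add_one_of_adj hconn hadj z
  have h₂ := dist_le_dist_add_one_of_adj hconn hadj.symm z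
  rw [hab, Sym2.mem_iff] at hv hw
  rw [mem_ball] at hvI
  rcases hv with rfl | rfl <;> rcases hw with rfl | rfl <;> omega

lemma fullyOpen_gadget_ball_iff {u : V} (hu : 2 * r < H.dist z u) :
    fullyOpen H r (gadget H (ball H z r) K ω) u ↔ fullyOpen H r ω u := by
  have h : ∀ f : H.edgeSet, (∀ w ∈ (f : Sym2 V), H.dist u w ≤ r) →
      gadget H (ball H z r) K ω f = ω f := by
    refine fun f hf => gadget_of_forall_not_mem fun w hw hwI => ?_
    have htri : H.dist z u ≤ H.dist z w + H.dist w u := hconn.dist_triangle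
    have hwu : H.dist w u = H.dist u w := SimpleGraph.dist_comm
    have := hf w hw
    rw [mem_ball] at hwI
    omega
  exact forall_congr' fun f => imp_congr_right fun hf => by rw [h f hf]

lemma reachable_of_fullyOpen (hz : fullyOpen H r ω z) {w : V} (hw : H.dist z w ≤ r) :
    (openGraph H ω).Reachable z w := by
  suffices h : ∀ k ≤ r, ∀ w, H.dist z w ≤ k → (openGraph H ω).Reachable z w from
    h r le_rfl w hw
  intro k
  induction k with
  | zero =>
    intro _ w hw
    rw [(hconn.dist_eq_zero_iff).mp (Nat.le_zero.mp hw)]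
  | succ k ih =>
    intro hk w hw
    rcases exists_adj_dist_le_of_dist_le_succ hconn hw with rfl | ⟨w', hw'w, hw'⟩
    · rfl
    · refine (ih (by omega) w' hw').trans (SimpleGraph.Adj.reachable ⟨hw'w, hz _ ?_⟩)
      intro v hv
      rcases Sym2.mem_iff.mp hv with rfl | rfl <;> omega

lemma gadget_ball_flipE_of_not_forall_mem_edgeBall {e e' : H.edgeSet} {b : Bool} {x : V}
    (hx : x ∈ (e : Sym2 V)) (hzx : H.dist z x ≤ r)
    (he' : ¬ ∀ w ∈ (e' : Sym2 V), w ∈ edgeBall H e (3 * r + 1)) :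
    gadget H (ball H z r) K (flipE H ω e b) e' = ω e' := by
  push Not at he'
  obtain ⟨w, hw, hwS⟩ := he'
  have hxw : 3 * r + 1 < H.dist x w := by
    by_contra! h
    exact hwS ⟨x, hx, h⟩
  have htri : H.dist x w ≤ H.dist x z + H.dist z w := hconn.dist_triangle
  have hxz : H.dist x z = H.dist z x := SimpleGraph.dist_comm
  rw [gadget_ball_of_lt_dist hconn hw (by omega), flipE_apply_of_ne]
  rintro rfl
  exact hwS ⟨w, hw, by simp⟩

variable {β : V → Bool} {A : Set V} (hβ : ∀ u, β u = true → 2 * r < H.dist z u)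
include hβ

lemma enhCluster_gadget_subset :
    enhCluster H r (gadget H (ball H z r) (enhCluster H r ω β A) ω) β A ⊆
      ball H z r ∪ enhCluster H r ω β A := by
  set K := enhCluster H r ω β A
  refine EnhClosed.enhCluster_subset ⟨?_, ?_⟩ fun a ha => Or.inr (subset_enhCluster ha)
  · rintro a ha b ⟨hab, hf⟩
    by_cases hbI : b ∈ ball H z r
    · exact Or.inl hbI
    by_cases haI : a ∈ ball H z r
    · exact forall_mem_union_of_gadget hf ⟨a, Sym2.mem_mk_left a b, haI⟩ b
        (Sym2.mem_mk_right a b)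
    · have hfω := gadget_of_forall_not_mem (K := K) (ω := ω)
        (f := ⟨s(a, b), (SimpleGraph.mem_edgeSet H).mpr hab⟩) fun w hw => by
          rcases Sym2.mem_iff.mp hw with rfl | rfl
          exacts [haI, hbI]
      exact Or.inr (enhClosed_enhCluster.adj_mem a (ha.resolve_left haI) b ⟨hab, hfω ▸ hf⟩)
  · rintro u hu hβu hfo v hv
    have hzu := hβ u hβu
    have huK : u ∈ K := hu.resolve_left (by rw [mem_ball]; omega)
    exact Or.inr (enhClosed_enhCluster.sphere_mem u huK hβu
      ((fullyOpen_gadget_ball_iff hconn hzu).mp hfo) v hv)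

/-- Through `x` the new cluster contains the fully open ball `B_r(z)`, and the jump from `z`
adds the sphere of radius `r + 1`. Edges leaving `B_{r+1}(z)` are untouched by the gadget and
enhanceable vertices are far from `z`, so the new cluster is closed for the old configuration. -/
lemma enhCluster_subset_enhCluster_gadget {x y : V} (hx : x ∈ enhCluster H r ω β A)
    (hxz : H.dist z x ≤ r) (hyz : H.dist z y ≤ r + 1) :
    enhCluster H r ω β {y} ⊆
      enhCluster H r (gadget H (ball H z r) (enhCluster H r ω β A) ω) (flipV β z true) A := by
  set K := enhCluster H r ω β A
  set T := enhCluster H r (gadget H (ball H z r) K ω) (flipV β z true) A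
  have hT : EnhClosed H r (gadget H (ball H z r) K ω) (flipV β z true) T :=
    enhClosed_enhCluster
  have hKT : K ⊆ T := by
    refine enhCluster_subset_enhCluster subset_rfl ?_ fun u _ hβu hfo =>
      ⟨flipV_true_of_eq_true hβu, (fullyOpen_gadget_ball_iff hconn (hβ u hβu)).mpr hfo⟩
    rintro a ha b ⟨hab, hf⟩
    have hb := enhClosed_enhCluster.adj_mem a ha b ⟨hab, hf⟩
    refine ⟨hab, gadget_of_forall_mem_union (fun w hw => ?_) hf⟩
    rcases Sym2.mem_iff.mp hw with rfl | rfl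
    exacts [Or.inr ha, Or.inr hb]
  have hzo : fullyOpen H r (gadget H (ball H z r) K ω) z := fun f hf => gadget_of_forall_mem hf
  have hzT : z ∈ T := hT.reachable_mem (hKT hx) (reachable_of_fullyOpen hconn hzo hxz).symm
  have hballT : ∀ w, H.dist z w ≤ r + 1 → w ∈ T := by
    intro w hw
    rcases Nat.lt_or_eq_of_le hw with hw | hw
    · exact hT.reachable_mem hzT (reachable_of_fullyOpen hconn hzo (by omega))
    · exact hT.sphere_mem z hzT (flipV_apply_self z) hzo w hw
  refine EnhClosed.enhCluster_subset ⟨?_, ?_⟩ (Set.singleton_subset_iff.mpr (hballT y hyz))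
  · rintro a ha b ⟨hab, hf⟩
    by_cases hb : H.dist z b ≤ r + 1
    · exact hballT b hb
    · refine hT.adj_mem a ha b ⟨hab, ?_⟩
      rwa [gadget_ball_of_lt_dist hconn (Sym2.mem_mk_right a b) (by omega)]
  · intro u hu hβu hfo v hv
    exact hT.sphere_mem u hu (flipV_true_of_eq_true hβu)
      ((fullyOpen_gadget_ball_iff hconn (hβ u hβu)).mpr hfo) v hv

end Gadget

theorem exists_sPivotal_of_pPivotal_of_eq_false (hconn : H.Connected) {r D L : ℕ} {o : V}
    {A B : Set V} (hB : ∀ u ∉ B, ∃ v, u ∈ ball H v r ∧ ∀ w ∈ ball H v r, w ∉ B)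
    (hD : B ⊆ ball H o D) (hL : D + 4 * r ≤ L) {e : H.edgeSet} {ω : H.edgeSet → Bool}
    {α : V → Bool} (hα : ∀ v ∈ edgeBall H e (3 * r + 1), α v = false)
    (hpiv : PPivotal H (enhConnEvent H r o L A B) e (ω, α)) :
    ∃ (ω' : H.edgeSet → Bool) (z : V), z ∈ edgeBall H e (3 * r + 1) ∧
      (∀ e' : H.edgeSet, ¬ (∀ w ∈ (e' : Sym2 V), w ∈ edgeBall H e (3 * r + 1)) →
        ω' e' = ω e') ∧
      SPivotal H (enhConnEvent H r o L A B) z (ω', α) := by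
  set K := enhCluster H r (truncE H o L (flipE H ω e false)) (truncV H o L α) A
  have hKB : ∀ v ∈ K, v ∉ B := fun v hv hvB => hpiv.2 ⟨v, hv, hvB⟩
  have hfar : ∀ u, truncV H o L α u = true → ∀ w ∈ (e : Sym2 V),
      3 * r + 1 < H.dist w u := by
    intro u hu w hw
    by_contra! h
    rw [truncV_eq_true_iff, hα u ⟨w, hw, h⟩] at hu
    exact Bool.false_ne_true hu.2
  obtain ⟨b, hb, hbB⟩ := hpiv.1
  obtain ⟨x, y, hexy, hxK, hby⟩ := exists_endpoint_of_mem_enhCluster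
    (fun f hf => (truncE_flipE_apply_of_ne hf).trans (truncE_flipE_apply_of_ne hf).symm)
    (fun u hu h => by
      have h₁ := hfar u hu _ (Sym2.out_fst_mem _)
      have h₂ := h _ (Sym2.out_fst_mem (e : Sym2 V))
      rw [SimpleGraph.dist_comm] at h₂
      omega)
    hb fun h => hKB b h hbB
  have hx : x ∈ (e : Sym2 V) := hexy ▸ Sym2.mem_mk_left x y
  have hxy : H.Adj x y := by
    rw [← SimpleGraph.mem_edgeSet, ← hexy]
    exact e.2
  obtain ⟨z, hzx, hzL, hzB⟩ := exists_ball_subset_ball_disjoint hconn hB hD hL (hKB x hxK)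
    (forall_dist_le_of_pPivotal hpiv x hx)
  have hxz : H.dist x z = H.dist z x := SimpleGraph.dist_comm
  have hz : z ∈ edgeBall H e (3 * r + 1) := ⟨x, hx, by omega⟩
  have hβ : ∀ u, truncV H o L α u = true → 2 * r < H.dist z u := fun u hu => by
    have h₁ := hfar u hu x hx
    have h₂ : H.dist x u ≤ H.dist x z + H.dist z u := hconn.dist_triangle
    omega
  refine ⟨gadget H (ball H z r) K (flipE H ω e false), z, hz,
    fun e' => gadget_ball_flipE_of_not_forall_mem_edgeBall hconn hx hzx, ?_⟩
  have hzL' : H.dist o z ≤ L := hzL (by simp)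
  have hyz : H.dist z y ≤ r + 1 := (dist_le_dist_add_one_of_adj hconn hxy.symm z).trans
    (by omega)
  simp only [SPivotal, enhConnEvent, Set.mem_ofPred_eq, truncE_gadget hzL,
    flipV_eq_self (hα z hz), truncV_flipV hzL']
  refine ⟨⟨b, enhCluster_subset_enhCluster_gadget hconn hβ hxK hzx hyz hby, hbB⟩, ?_⟩
  rintro ⟨v, hv, hvB⟩
  rcases enhCluster_gadget_subset hconn hβ hv with hvI | hvK
  exacts [hzB v hvI hvB, hKB v hvK hvB]

theorem sPivotal_of_pPivotal_sets_general {V : Type*} (H : SimpleGraph V) (o : V)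
    (hconn : H.Connected) (hlf : LocallyFinite' H)
    (r : ℕ)
    (A B : Set V) (hB : RNice H r B) :
    ∃ L0 : ℕ, ∀ L : ℕ, L0 ≤ L →
      ∀ (e : H.edgeSet) (c : (H.edgeSet → Bool) × (V → Bool)),
        PPivotal H
          {c' | (enhCluster H r (truncE H o L c'.1) (truncV H o L c'.2) A ∩ B).Nonempty}
          e c →
        ∃ (c' : (H.edgeSet → Bool) × (V → Bool)) (z : V),
          z ∈ edgeBall H e (3 * r + 1) ∧
          (∀ e' : H.edgeSet,
            ¬ (∀ w ∈ (e' : Sym2 V), w ∈ edgeBall H e (3 * r + 1)) → c'.1 e' = c.1 e') ∧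
          (∀ v : V, v ∉ edgeBall H e (3 * r + 1) → c'.2 v = c.2 v) ∧
          SPivotal H
            {c'' |
              (enhCluster H r (truncE H o L c''.1) (truncV H o L c''.2) A ∩ B).Nonempty}
            z c' := by
  classical
  obtain ⟨hBfin, -, hBnice⟩ := hB
  obtain ⟨D, hD⟩ := (hBfin.image (H.dist o)).bddAbove
  refine ⟨D + 4 * r, fun L hL e c hpiv => ?_⟩
  set S := edgeBall H e (3 * r + 1)
  have hflip : ∀ e' : H.edgeSet, ¬ (∀ w ∈ (e' : Sym2 V), w ∈ S) →
      flipE H c.1 e true e' = c.1 e' := by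
    refine fun e' he' => flipE_apply_of_ne ?_
    rintro rfl
    exact he' fun w hw => ⟨w, hw, by simp⟩
  set α : V → Bool := fun v => if v ∈ S then false else c.2 v
  have hle : ∀ v, α v = true → c.2 v = true := fun v hv => by
    simp only [α] at hv
    split_ifs at hv
    exact hv
  by_cases hα : (flipE H c.1 e true, α) ∈ enhConnEvent H r o L A B
  · obtain ⟨ω', z, hz, hω', hpiv'⟩ := exists_sPivotal_of_pPivotal_of_eq_false hconn hBnice
      (fun b hb => hD (Set.mem_image_of_mem _ hb)) hL (fun v hv => if_pos hv)
      ⟨hα, fun h => hpiv.2 (mem_enhConnEvent_of_le hle h)⟩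
    exact ⟨(ω', α), z, hz, hω', fun v hv => if_neg hv, hpiv'⟩
  · obtain ⟨z, hz, β, hβ, hpiv'⟩ := exists_sPivotal_of_mem_of_not_mem _ _
      (finite_edgeBall hconn hlf e (3 * r + 1)) hpiv.1 hα hle fun v hv => if_neg hv
    exact ⟨(flipE H c.1 e true, β), z, hz, hflip, hβ, hpiv'⟩

/-- **Lemma (from `p`-pivotality to `s`-pivotality, two-set version).**
With `R = 3r+1`: for any non-empty finite `A, B ⊆ V(H)` with `B` `r`-nice and
`d(A,B) > 3r`, there is `L₀ = L₀(A,B)` such that for every `L ≥ L₀`, if an edge `e` is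
`p`-pivotal for `E_L^{A,B}` in a configuration `c`, then there are a configuration `c'`
differing from `c` only inside `B_R(e)` and a vertex `z ∈ B_R(e)` which is `s`-pivotal
for `E_L^{A,B}` in `c'`. -/
theorem sPivotal_of_pPivotal_sets {V : Type*} (H : SimpleGraph V) (o : V)
    (hconn : H.Connected) (hlf : LocallyFinite' H)
    (r : ℕ) (hr : 1 ≤ r)
    (A B : Set V) (hA : A.Finite) (hAne : A.Nonempty) (hB : RNice H r B)
    (hd : ∀ a ∈ A, ∀ b ∈ B, 3 * r < H.dist a b) :
    ∃ L0 : ℕ, ∀ L : ℕ, L0 ≤ L →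
      ∀ (e : H.edgeSet) (c : (H.edgeSet → Bool) × (V → Bool)),
        PPivotal H
          {c' | (enhCluster H r (truncE H o L c'.1) (truncV H o L c'.2) A ∩ B).Nonempty}
          e c →
        ∃ (c' : (H.edgeSet → Bool) × (V → Bool)) (z : V),
          z ∈ edgeBall H e (3 * r + 1) ∧
          (∀ e' : H.edgeSet,
            ¬ (∀ w ∈ (e' : Sym2 V), w ∈ edgeBall H e (3 * r + 1)) → c'.1 e' = c.1 e') ∧
          (∀ v : V, v ∉ edgeBall H e (3 * r + 1) → c'.2 v = c.2 v) ∧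
          SPivotal H
            {c'' |
              (enhCluster H r (truncE H o L c''.1) (truncV H o L c''.2) A ∩ B).Nonempty}
            z c' :=
  sPivotal_of_pPivotal_sets_general H o hconn hlf r A B hB

end Percolation
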